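/- arXiv:2508.21713 — 3 statements merged into one kernel-verified Lean document; each statement's English description precedes it below -/
import Mathlib

section
/- Let f_1,…,f_n be polynomials in R[x_1,…,x_n] such that for every permutation σ in the subgroup S_{{1,…,p}} × S_{{p+1,…,n}} of S_n and every index i, σ·f_i = f_{σ(i)}. Then for any transposition τ = (i j) with i,j both in {1,…,p} or both in {p+1,…,n}, the difference f_i − f_j is divisible by x_i − x_j. -/
open MvPolynomial

/-! Modulo `X i - X j` the substitution `X j ↦ X i` is the identity, so `X i - X j` divides
`g - rename m g` for `m = update id j i`. Since `m ∘ swap i j = m`, the substitution kills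
`g - rename (swap i j) g`; and block-equivariance gives `rename (swap i j) (f i) = f j`. -/

theorem X_sub_X_dvd_sub_rename_update {σ R : Type*} [CommRing R] [DecidableEq σ] (i j : σ)
    (g : MvPolynomial σ R) :
    (X i - X j : MvPolynomial σ R) ∣ g - rename (Function.update id j i) g := by
  set I := Ideal.span {(X i - X j : MvPolynomial σ R)}
  rw [← Ideal.mem_span_singleton, ← Ideal.Quotient.eq]
  suffices (Ideal.Quotient.mkₐ R I).comp (rename (Function.update id j i)) =
      Ideal.Quotient.mkₐ R I from (AlgHom.congr_fun this g).symm
  ext k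
  rcases eq_or_ne k j with rfl | hkj
  · simp only [AlgHom.comp_apply, rename_X, Function.update_self, Ideal.Quotient.mkₐ_eq_mk]
    exact Ideal.Quotient.eq.mpr (Ideal.mem_span_singleton_self _)
  · simp only [AlgHom.comp_apply, rename_X, Function.update_of_ne hkj, id]

theorem X_sub_X_dvd_sub_rename_swap {σ R : Type*} [CommRing R] [DecidableEq σ] (i j : σ)
    (g : MvPolynomial σ R) :
    (X i - X j : MvPolynomial σ R) ∣ g - rename (Equiv.swap i j) g := by
  have hcomp : Function.update id j i ∘ Equiv.swap i j = Function.update id j i := by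
    funext k
    simp only [Function.comp_apply, Equiv.swap_apply_def, Function.update_apply, id]
    split_ifs <;> simp_all
  have hkill : rename (Function.update id j i) (g - rename (Equiv.swap i j) g) = 0 := by
    rw [map_sub, rename_rename, hcomp, sub_self]
  simpa [hkill] using X_sub_X_dvd_sub_rename_update i j (g - rename (Equiv.swap i j) g)

theorem Equiv.iff_swap_apply_of_iff {α : Type*} [DecidableEq α] {P : α → Prop} {i j : α}
    (hij : P i ↔ P j) (k : α) : P k ↔ P (Equiv.swap i j k) := by
  rcases eq_or_ne k i with rfl | hki
  · simpa using hij
  rcases eq_or_ne k j with rfl | hkj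
  · simpa using hij.symm
  · rw [Equiv.swap_apply_of_ne_of_ne hki hkj]

theorem stmt1_general {R : Type*} [CommRing R] {n p : ℕ}
    (f : Fin n → MvPolynomial (Fin n) R)
    (hequiv : ∀ σ : Equiv.Perm (Fin n),
      (∀ k : Fin n, (k : ℕ) < p ↔ ((σ k : ℕ) < p)) →
      ∀ i : Fin n, rename σ (f i) = f (σ i))
    (i j : Fin n)
    (hblock : ((i : ℕ) < p ∧ (j : ℕ) < p) ∨ (p ≤ (i : ℕ) ∧ p ≤ (j : ℕ))) :
    (X i - X j : MvPolynomial (Fin n) R) ∣ (f i - f j) := by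
  have hij : (i : ℕ) < p ↔ (j : ℕ) < p := by omega
  have hswap : rename (Equiv.swap i j) (f i) = f j := by
    simpa using hequiv (Equiv.swap i j)
      (Equiv.iff_swap_apply_of_iff (P := fun k : Fin n => (k : ℕ) < p) hij) i
  simpa [hswap] using X_sub_X_dvd_sub_rename_swap i j (f i)

/-- For a system equivariant with respect to the block-permutation subgroup
`S_{{1,…,p}} × S_{{p+1,…,n}}` of `S_n`, if `i, j` lie in the same block then
`f i - f j` is divisible by `X i - X j`. -/
theorem stmt1 {R : Type*} [CommRing R] {n p : ℕ} (hp : p ≤ n)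
    (f : Fin n → MvPolynomial (Fin n) R)
    (hequiv : ∀ σ : Equiv.Perm (Fin n),
      (∀ k : Fin n, (k : ℕ) < p ↔ ((σ k : ℕ) < p)) →
      ∀ i : Fin n, rename σ (f i) = f (σ i))
    (i j : Fin n)
    (hblock : ((i : ℕ) < p ∧ (j : ℕ) < p) ∨ (p ≤ (i : ℕ) ∧ p ≤ (j : ℕ))) :
    (X i - X j : MvPolynomial (Fin n) R) ∣ (f i - f j) :=
  stmt1_general f hequiv i j hblock
end

section
/- For the S_{{1,2,3}} × S_{{4,5}}-equivariant quadratic system f_1,…,f_5 of the paper's example, the Macaulay resultant satisfies Res(f_1,…,f_5) = ± a⁸ (a³+3a²b+3a²c+2ab²+8abc+6b²c)¹² (p−q)¹⁶ (p+q)¹⁶ (3b+3c+a)⁴; in particular Res(f_1,…,f_5) = 0 if and only if a(a³+3a²b+3a²c+2ab²+8abc+6b²c)(p−q)(p+q)(a+3b+3c) = 0. -/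
/-!
Only `x₄ x₅` couples the two blocks of variables. If `p ≠ ±q`, the equations `f₄, f₅` force
`x₄ = x₅ = 0`, and the remaining ternary forms differ pairwise by
`fᵢ - fⱼ = (xᵢ - xⱼ)(a(xᵢ + xⱼ) + b(x₁ + x₂ + x₃))`; for `a ≠ 0` this makes two coordinates
coincide. On the line `(v, u, u)` the same factorisation leaves either `u = v`, excluded by
`a + 3b + 3c ≠ 0`, or a linear form whose resultant with `f₁` is the cubic factor.
Conversely each vanishing factor comes with an explicit nonzero root.
-/

open Polynomial

section

variable {K : Type*} [Field K]

def HasNontrivialZero (a b c p q : K) : Prop :=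
  ∃ x₁ x₂ x₃ x₄ x₅ : K, ¬ (x₁ = 0 ∧ x₂ = 0 ∧ x₃ = 0 ∧ x₄ = 0 ∧ x₅ = 0) ∧
    a * x₁^2 + b * x₁ * (x₁ + x₂ + x₃) + c * (x₁^2 + x₂^2 + x₃^2) + x₄ * x₅ = 0 ∧
    a * x₂^2 + b * x₂ * (x₁ + x₂ + x₃) + c * (x₁^2 + x₂^2 + x₃^2) + x₄ * x₅ = 0 ∧
    a * x₃^2 + b * x₃ * (x₁ + x₂ + x₃) + c * (x₁^2 + x₂^2 + x₃^2) + x₄ * x₅ = 0 ∧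
    p * x₄^2 + q * x₅^2 = 0 ∧
    p * x₅^2 + q * x₄^2 = 0

lemma eq_zero_of_swap_eq_zero [NeZero (2 : K)] {p q x y : K} (hm : p - q ≠ 0) (hp : p + q ≠ 0)
    (h₁ : p * x^2 + q * y^2 = 0) (h₂ : p * y^2 + q * x^2 = 0) : x = 0 ∧ y = 0 := by
  have hsum : x^2 + y^2 = 0 :=
    (mul_eq_zero.mp (by linear_combination h₁ + h₂ : (p + q) * (x^2 + y^2) = 0)).resolve_left hp
  have hdiff : x^2 - y^2 = 0 :=
    (mul_eq_zero.mp (by linear_combination h₁ - h₂ : (p - q) * (x^2 - y^2) = 0)).resolve_left hm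
  have hx : 2 * x^2 = 0 := by linear_combination hsum + hdiff
  have hy : 2 * y^2 = 0 := by linear_combination hsum - hdiff
  simpa [two_ne_zero] using And.intro hx hy

section Ternary

variable {a b c : K}

lemma eq_zero_of_linear_of_quadratic {u v : K}
    (hB : a^3 + 3*a^2*b + 3*a^2*c + 2*a*b^2 + 8*a*b*c + 6*b^2*c ≠ 0)
    (hL : (a + 2*b) * u + (a + b) * v = 0)
    (hQ : a * v^2 + b * v * (v + 2*u) + c * (v^2 + 2*u^2) = 0) :
    u = 0 ∧ v = 0 := by
  -- the cubic factor is the resultant of the two binary forms `hL` and `hQ`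
  have hu : (a^3 + 3*a^2*b + 3*a^2*c + 2*a*b^2 + 8*a*b*c + 6*b^2*c) * u^2 = 0 := by
    linear_combination (a+b)^2 * hQ -
      ((a^2 + 2*a*b + b^2 + a*c + b*c) * v - (a^2 + a*b + a*c + 2*b*c) * u) * hL
  have hv : (a^3 + 3*a^2*b + 3*a^2*c + 2*a*b^2 + 8*a*b*c + 6*b^2*c) * v^2 = 0 := by
    linear_combination (a+2*b)^2 * hQ -
      ((2*a*b + 4*b^2 - 2*a*c - 2*b*c) * v + (2*a*c + 4*b*c) * u) * hL
  simpa [hB] using And.intro hu hv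

lemma eq_zero_of_two_coords_eq {u v : K}
    (hB : a^3 + 3*a^2*b + 3*a^2*c + 2*a*b^2 + 8*a*b*c + 6*b^2*c ≠ 0)
    (hs : a + 3*b + 3*c ≠ 0)
    (hv : a * v^2 + b * v * (v + 2*u) + c * (v^2 + 2*u^2) = 0)
    (hu : a * u^2 + b * u * (v + 2*u) + c * (v^2 + 2*u^2) = 0) :
    u = 0 ∧ v = 0 := by
  have : (v - u) * ((a + 2*b) * u + (a + b) * v) = 0 := by linear_combination hv - hu
  rcases mul_eq_zero.mp this with huv | hL
  · obtain rfl : v = u := sub_eq_zero.mp huv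
    have : (a + 3*b + 3*c) * v^2 = 0 := by linear_combination hv
    have hv0 : v = 0 := by simpa [hs] using this
    exact ⟨hv0, hv0⟩
  · exact eq_zero_of_linear_of_quadratic hB hL hv

lemma two_coords_eq {x₁ x₂ x₃ : K} (ha : a ≠ 0)
    (h₁ : a * x₁^2 + b * x₁ * (x₁ + x₂ + x₃) + c * (x₁^2 + x₂^2 + x₃^2) = 0)
    (h₂ : a * x₂^2 + b * x₂ * (x₁ + x₂ + x₃) + c * (x₁^2 + x₂^2 + x₃^2) = 0)
    (h₃ : a * x₃^2 + b * x₃ * (x₁ + x₂ + x₃) + c * (x₁^2 + x₂^2 + x₃^2) = 0) :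
    x₁ = x₂ ∨ x₁ = x₃ ∨ x₂ = x₃ := by
  have h₁₂ : (x₁ - x₂) * (a * (x₁ + x₂) + b * (x₁ + x₂ + x₃)) = 0 := by
    linear_combination h₁ - h₂
  have h₁₃ : (x₁ - x₃) * (a * (x₁ + x₃) + b * (x₁ + x₂ + x₃)) = 0 := by
    linear_combination h₁ - h₃
  rcases mul_eq_zero.mp h₁₂ with e | L₁₂
  · exact .inl (sub_eq_zero.mp e)
  rcases mul_eq_zero.mp h₁₃ with e | L₁₃
  · exact .inr (.inl (sub_eq_zero.mp e))
  have : a * (x₂ - x₃) = 0 := by linear_combination L₁₂ - L₁₃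
  exact .inr (.inr (sub_eq_zero.mp ((mul_eq_zero.mp this).resolve_left ha)))

lemma eq_zero_of_ternary {x₁ x₂ x₃ : K} (ha : a ≠ 0)
    (hB : a^3 + 3*a^2*b + 3*a^2*c + 2*a*b^2 + 8*a*b*c + 6*b^2*c ≠ 0)
    (hs : a + 3*b + 3*c ≠ 0)
    (h₁ : a * x₁^2 + b * x₁ * (x₁ + x₂ + x₃) + c * (x₁^2 + x₂^2 + x₃^2) = 0)
    (h₂ : a * x₂^2 + b * x₂ * (x₁ + x₂ + x₃) + c * (x₁^2 + x₂^2 + x₃^2) = 0)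
    (h₃ : a * x₃^2 + b * x₃ * (x₁ + x₂ + x₃) + c * (x₁^2 + x₂^2 + x₃^2) = 0) :
    x₁ = 0 ∧ x₂ = 0 ∧ x₃ = 0 := by
  rcases two_coords_eq ha h₁ h₂ h₃ with rfl | rfl | rfl
  · obtain ⟨hu, hv⟩ := eq_zero_of_two_coords_eq (u := x₁) (v := x₃) hB hs
      (by linear_combination h₃) (by linear_combination h₁)
    exact ⟨hu, hu, hv⟩
  · obtain ⟨hu, hv⟩ := eq_zero_of_two_coords_eq (u := x₁) (v := x₂) hB hs
      (by linear_combination h₂) (by linear_combination h₁)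
    exact ⟨hu, hv, hu⟩
  · obtain ⟨hu, hv⟩ := eq_zero_of_two_coords_eq (u := x₂) (v := x₁) hB hs
      (by linear_combination h₁) (by linear_combination h₂)
    exact ⟨hv, hu, hu⟩

end Ternary

variable {a b c p q : K}

lemma not_hasNontrivialZero [NeZero (2 : K)] (ha : a ≠ 0)
    (hB : a^3 + 3*a^2*b + 3*a^2*c + 2*a*b^2 + 8*a*b*c + 6*b^2*c ≠ 0)
    (hm : p - q ≠ 0) (hp : p + q ≠ 0) (hs : a + 3*b + 3*c ≠ 0) :
    ¬ HasNontrivialZero a b c p q := by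
  rintro ⟨x₁, x₂, x₃, x₄, x₅, hne, h₁, h₂, h₃, h₄, h₅⟩
  obtain ⟨rfl, rfl⟩ := eq_zero_of_swap_eq_zero hm hp h₄ h₅
  obtain ⟨rfl, rfl, rfl⟩ := eq_zero_of_ternary (x₁ := x₁) (x₂ := x₂) (x₃ := x₃) ha hB hs
    (by linear_combination h₁) (by linear_combination h₂) (by linear_combination h₃)
  exact hne ⟨rfl, rfl, rfl, rfl, rfl⟩

lemma hasNontrivialZero_of_linear_eq_zero (hs : a + 3*b + 3*c = 0) :
    HasNontrivialZero a b c p q :=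
  ⟨1, 1, 1, 0, 0, fun h => one_ne_zero h.1, by linear_combination hs,
    by linear_combination hs, by linear_combination hs, by ring, by ring⟩

variable [IsAlgClosed K]

lemma hasNontrivialZero_of_a_eq_zero (ha : a = 0) : HasNontrivialZero a b c p q := by
  obtain ⟨ω, hω⟩ := IsAlgClosed.exists_root (X^2 + X + 1 : K[X])
    (by rw [show (X^2 + X + 1 : K[X]).degree = 2 by compute_degree!]; simp)
  replace hω : ω^2 + ω + 1 = 0 := by simpa using hω
  refine ⟨1, ω, ω^2, 0, 0, fun h => one_ne_zero h.1, ?_, ?_, ?_, by ring, by ring⟩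
  · linear_combination ha + (b + c*(ω^2 - ω + 1)) * hω
  · linear_combination ω^2 * ha + (b*ω + c*(ω^2 - ω + 1)) * hω
  · linear_combination ω^4 * ha + (b*ω^2 + c*(ω^2 - ω + 1)) * hω

lemma hasNontrivialZero_of_cubic_eq_zero
    (hB : a^3 + 3*a^2*b + 3*a^2*c + 2*a*b^2 + 8*a*b*c + 6*b^2*c = 0) :
    HasNontrivialZero a b c p q := by
  by_cases ha : a = 0
  · exact hasNontrivialZero_of_a_eq_zero ha
  -- `(u, v) = (-(a+b), a+2b)` is the common zero of the forms in `eq_zero_of_linear_of_quadratic`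
  refine ⟨-(a+b), -(a+b), a+2*b, 0, 0, ?_, ?_, ?_, ?_, by ring, by ring⟩
  · rintro ⟨e₁, -, e₃, -, -⟩
    exact ha (by linear_combination (-2 : K) * e₁ - e₃)
  all_goals linear_combination hB

lemma hasNontrivialZero_of_sub_eq_zero (hm : p - q = 0) : HasNontrivialZero a b c p q := by
  obtain ⟨i, hi⟩ := IsAlgClosed.exists_pow_nat_eq (-1 : K) two_pos
  obtain ⟨r, hr⟩ := IsAlgClosed.exists_pow_nat_eq ((a + 3*b + 3*c) * i) two_pos
  refine ⟨1, 1, 1, r, i*r, fun h => one_ne_zero h.1, ?_, ?_, ?_, ?_, ?_⟩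
  iterate 3 linear_combination i * hr + (a + 3*b + 3*c) * hi
  · linear_combination r^2 * hm + q * r^2 * hi
  · linear_combination p * r^2 * hi - r^2 * hm

lemma hasNontrivialZero_of_add_eq_zero (hp : p + q = 0) : HasNontrivialZero a b c p q := by
  obtain ⟨r, hr⟩ := IsAlgClosed.exists_pow_nat_eq (-(a + 3*b + 3*c)) two_pos
  refine ⟨1, 1, 1, r, r, fun h => one_ne_zero h.1, ?_, ?_, ?_, ?_, ?_⟩
  iterate 3 linear_combination hr
  all_goals linear_combination r^2 * hp

end

/-- For the `S_{{1,2,3}} × S_{{4,5}}`-equivariant quadratic system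
`fᵢ = a xᵢ² + b xᵢ(x₁+x₂+x₃) + c(x₁²+x₂²+x₃²) + x₄x₅` (`i = 1,2,3`),
`f₄ = p x₄² + q x₅²`, `f₅ = p x₅² + q x₄²` over an algebraically closed field `K` of
characteristic zero, the vanishing of the resultant — equivalent to the existence of a
nonzero common root in `K⁵` — holds if and only if
`a(a³+3a²b+3a²c+2ab²+8abc+6b²c)(p−q)(p+q)(a+3b+3c) = 0`. -/
theorem stmt16 {K : Type*} [Field K] [IsAlgClosed K] [CharZero K] (a b c p q : K) :
    (∃ x₁ x₂ x₃ x₄ x₅ : K, ¬ (x₁ = 0 ∧ x₂ = 0 ∧ x₃ = 0 ∧ x₄ = 0 ∧ x₅ = 0) ∧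
        a * x₁^2 + b * x₁ * (x₁ + x₂ + x₃) + c * (x₁^2 + x₂^2 + x₃^2) + x₄ * x₅ = 0 ∧
        a * x₂^2 + b * x₂ * (x₁ + x₂ + x₃) + c * (x₁^2 + x₂^2 + x₃^2) + x₄ * x₅ = 0 ∧
        a * x₃^2 + b * x₃ * (x₁ + x₂ + x₃) + c * (x₁^2 + x₂^2 + x₃^2) + x₄ * x₅ = 0 ∧
        p * x₄^2 + q * x₅^2 = 0 ∧
        p * x₅^2 + q * x₄^2 = 0) ↔
      a * (a^3 + 3*a^2*b + 3*a^2*c + 2*a*b^2 + 8*a*b*c + 6*b^2*c) *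
        (p - q) * (p + q) * (a + 3*b + 3*c) = 0 := by
  change HasNontrivialZero a b c p q ↔ _
  simp only [mul_eq_zero]
  constructor
  · intro h
    by_contra! hne
    obtain ⟨⟨⟨⟨ha, hB⟩, hm⟩, hp⟩, hs⟩ := hne
    exact not_hasNontrivialZero ha hB hm hp hs h
  · rintro ((((ha | hB) | hm) | hp) | hs)
    exacts [hasNontrivialZero_of_a_eq_zero ha, hasNontrivialZero_of_cubic_eq_zero hB,
      hasNontrivialZero_of_sub_eq_zero hm, hasNontrivialZero_of_add_eq_zero hp,
      hasNontrivialZero_of_linear_eq_zero hs]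
end

section
/- For the quadratic system f_i = a x_i² + b x_i(x_1+x_2+x_3) + c(x_1²+x_2²+x_3²) + x_4x_5 (i=1,2,3), f_4 = p x_4² + q x_5², f_5 = p x_5² + q x_4² over an algebraically closed field of characteristic 0: if a ≠ 0, (a+3b+3c) ≠ 0, a³+3a²b+3a²c+2ab²+8abc+6b²c ≠ 0, and p² ≠ q², then the only common zero of f_1,…,f_5 in K⁵ is the origin. -/
/-!
Adding and subtracting `f₄, f₅` gives `(p ± q)(x₄² ± x₅²) = 0`, so `x₄ = x₅ = 0` when
`p² ≠ q²` and `2 ≠ 0`. The remaining equations `gᵢ = a xᵢ² + b xᵢ s + c Q` (with `s = Σ xⱼ`,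
`Q = Σ xⱼ²`) satisfy `gᵢ - gⱼ = (xᵢ - xⱼ)(a(xᵢ + xⱼ) + b s)`; since `a ≠ 0` the three
linear factors cannot all vanish for three distinct pairs, so two coordinates agree. At a point
`(t, t, u)` eliminating `u` gives `E t² = 0` with `E = a³+3a²b+3a²c+2ab²+8abc+6b²c`, which
forces `t = u`, and at `(t, t, t)` the system reads `(a + 3b + 3c) t² = 0`.
-/

section

variable {K : Type*} [Field K]

theorem eq_zero_of_sq_ne_sq [NeZero (2 : K)] {p q x y : K} (hpq : p ^ 2 ≠ q ^ 2)
    (h₁ : p * x ^ 2 + q * y ^ 2 = 0) (h₂ : p * y ^ 2 + q * x ^ 2 = 0) : x = 0 ∧ y = 0 := by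
  have hadd : p + q ≠ 0 := fun h => hpq (by linear_combination (p - q) * h)
  have hsub : p - q ≠ 0 := fun h => hpq (by linear_combination (p + q) * h)
  have hs : x ^ 2 + y ^ 2 = 0 := by
    have : (p + q) * (x ^ 2 + y ^ 2) = 0 := by linear_combination h₁ + h₂
    exact (mul_eq_zero.1 this).resolve_left hadd
  have hd : x ^ 2 - y ^ 2 = 0 := by
    have : (p - q) * (x ^ 2 - y ^ 2) = 0 := by linear_combination h₁ - h₂
    exact (mul_eq_zero.1 this).resolve_left hsub
  have hx : (2 : K) * x ^ 2 = 0 := by linear_combination hs + hd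
  have hy : (2 : K) * y ^ 2 = 0 := by linear_combination hs - hd
  simpa [two_ne_zero] using And.intro hx hy

variable {a b c : K}

theorem eq_zero_of_two_eq_of_linear
    (hE : a^3 + 3*a^2*b + 3*a^2*c + 2*a*b^2 + 8*a*b*c + 6*b^2*c ≠ 0) {t u : K}
    (hL : (a + 2*b) * t + (a + b) * u = 0)
    (ht : a * t^2 + b * t * (t + t + u) + c * (t^2 + t^2 + u^2) = 0) : t = 0 ∧ u = 0 := by
  have hEt : (a^3 + 3*a^2*b + 3*a^2*c + 2*a*b^2 + 8*a*b*c + 6*b^2*c) * t^2 = 0 := by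
    linear_combination (a + b)^2 * ht -
      (b * (a + b) * t + c * ((a + 2*b) * t + (a + b) * u) - 2 * c * (a + 2*b) * t) * hL
  obtain rfl : t = 0 := by simpa [hE] using hEt
  refine ⟨rfl, by_contra fun hu => hE ?_⟩
  -- for `u ≠ 0` the equations force `a + b = 0` and `c = 0`, where `E = a(a + b)(a + 2b)`
  have hab : a + b = 0 := by simpa [hu] using (by linear_combination hL : (a + b) * u = 0)
  have hc : c = 0 := by simpa [hu] using (by linear_combination ht : c * u^2 = 0)
  linear_combination (a^2 + 2*a*b) * hab + (3*a^2 + 8*a*b + 6*b^2) * hc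

theorem eq_of_two_eq
    (hE : a^3 + 3*a^2*b + 3*a^2*c + 2*a*b^2 + 8*a*b*c + 6*b^2*c ≠ 0) {t u : K}
    (ht : a * t^2 + b * t * (t + t + u) + c * (t^2 + t^2 + u^2) = 0)
    (hu : a * u^2 + b * u * (t + t + u) + c * (t^2 + t^2 + u^2) = 0) : t = u := by
  by_contra htu
  have hL : (a + 2*b) * t + (a + b) * u = 0 := by
    have : (t - u) * ((a + 2*b) * t + (a + b) * u) = 0 := by linear_combination ht - hu
    exact (mul_eq_zero.1 this).resolve_left (sub_ne_zero.2 htu)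
  obtain ⟨rfl, rfl⟩ := eq_zero_of_two_eq_of_linear hE hL ht
  exact htu rfl

theorem eq_zero_of_reduced_system (ha : a ≠ 0) (habc : a + 3*b + 3*c ≠ 0)
    (hE : a^3 + 3*a^2*b + 3*a^2*c + 2*a*b^2 + 8*a*b*c + 6*b^2*c ≠ 0) {x₁ x₂ x₃ : K}
    (g₁ : a * x₁^2 + b * x₁ * (x₁ + x₂ + x₃) + c * (x₁^2 + x₂^2 + x₃^2) = 0)
    (g₂ : a * x₂^2 + b * x₂ * (x₁ + x₂ + x₃) + c * (x₁^2 + x₂^2 + x₃^2) = 0)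
    (g₃ : a * x₃^2 + b * x₃ * (x₁ + x₂ + x₃) + c * (x₁^2 + x₂^2 + x₃^2) = 0) :
    x₁ = 0 ∧ x₂ = 0 ∧ x₃ = 0 := by
  have h₁₂₃ : x₁ = x₂ ∧ x₁ = x₃ := by
    by_cases e₁₂ : x₁ = x₂
    · subst e₁₂
      exact ⟨rfl, eq_of_two_eq hE g₁ g₃⟩
    by_cases e₁₃ : x₁ = x₃
    · subst e₁₃
      exact absurd (eq_of_two_eq hE (by linear_combination g₁) (by linear_combination g₂)) e₁₂
    have L₁₂ : a * (x₁ + x₂) + b * (x₁ + x₂ + x₃) = 0 := by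
      have : (x₁ - x₂) * (a * (x₁ + x₂) + b * (x₁ + x₂ + x₃)) = 0 := by linear_combination g₁ - g₂
      exact (mul_eq_zero.1 this).resolve_left (sub_ne_zero.2 e₁₂)
    have L₁₃ : a * (x₁ + x₃) + b * (x₁ + x₂ + x₃) = 0 := by
      have : (x₁ - x₃) * (a * (x₁ + x₃) + b * (x₁ + x₂ + x₃)) = 0 := by linear_combination g₁ - g₃
      exact (mul_eq_zero.1 this).resolve_left (sub_ne_zero.2 e₁₃)
    obtain rfl : x₂ = x₃ := by
      have : a * (x₂ - x₃) = 0 := by linear_combination L₁₂ - L₁₃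
      exact sub_eq_zero.1 ((mul_eq_zero.1 this).resolve_left ha)
    exact absurd (eq_of_two_eq hE (by linear_combination g₂) (by linear_combination g₁)).symm e₁₂
  obtain ⟨rfl, rfl⟩ := h₁₂₃
  have hx : (a + 3*b + 3*c) * x₁^2 = 0 := by linear_combination g₁
  have : x₁ = 0 := by simpa [habc] using hx
  exact ⟨this, this, this⟩

end

theorem stmt17_general {K : Type*} [Field K] [CharZero K] (a b c p q : K)
    (ha : a ≠ 0) (habc : a + 3*b + 3*c ≠ 0)
    (hE : a^3 + 3*a^2*b + 3*a^2*c + 2*a*b^2 + 8*a*b*c + 6*b^2*c ≠ 0)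
    (hpq : p^2 ≠ q^2)
    (x₁ x₂ x₃ x₄ x₅ : K)
    (h1 : a * x₁^2 + b * x₁ * (x₁ + x₂ + x₃) + c * (x₁^2 + x₂^2 + x₃^2) + x₄ * x₅ = 0)
    (h2 : a * x₂^2 + b * x₂ * (x₁ + x₂ + x₃) + c * (x₁^2 + x₂^2 + x₃^2) + x₄ * x₅ = 0)
    (h3 : a * x₃^2 + b * x₃ * (x₁ + x₂ + x₃) + c * (x₁^2 + x₂^2 + x₃^2) + x₄ * x₅ = 0)
    (h4 : p * x₄^2 + q * x₅^2 = 0)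
    (h5 : p * x₅^2 + q * x₄^2 = 0) :
    x₁ = 0 ∧ x₂ = 0 ∧ x₃ = 0 ∧ x₄ = 0 ∧ x₅ = 0 := by
  obtain ⟨rfl, rfl⟩ := eq_zero_of_sq_ne_sq hpq h4 h5
  simp only [mul_zero, add_zero] at h1 h2 h3
  obtain ⟨h₁, h₂, h₃⟩ := eq_zero_of_reduced_system ha habc hE h1 h2 h3
  exact ⟨h₁, h₂, h₃, rfl, rfl⟩

/-- For the quadratic system
`fᵢ = a xᵢ² + b xᵢ(x₁+x₂+x₃) + c(x₁²+x₂²+x₃²) + x₄x₅` (`i = 1,2,3`),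
`f₄ = p x₄² + q x₅²`, `f₅ = p x₅² + q x₄²` over an algebraically closed field of
characteristic zero: if `a ≠ 0`, `a+3b+3c ≠ 0`, `a³+3a²b+3a²c+2ab²+8abc+6b²c ≠ 0` and
`p² ≠ q²`, then the only common zero in `K⁵` is the origin. -/
theorem stmt17 {K : Type*} [Field K] [IsAlgClosed K] [CharZero K] (a b c p q : K)
    (ha : a ≠ 0) (habc : a + 3*b + 3*c ≠ 0)
    (hE : a^3 + 3*a^2*b + 3*a^2*c + 2*a*b^2 + 8*a*b*c + 6*b^2*c ≠ 0)
    (hpq : p^2 ≠ q^2)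
    (x₁ x₂ x₃ x₄ x₅ : K)
    (h1 : a * x₁^2 + b * x₁ * (x₁ + x₂ + x₃) + c * (x₁^2 + x₂^2 + x₃^2) + x₄ * x₅ = 0)
    (h2 : a * x₂^2 + b * x₂ * (x₁ + x₂ + x₃) + c * (x₁^2 + x₂^2 + x₃^2) + x₄ * x₅ = 0)
    (h3 : a * x₃^2 + b * x₃ * (x₁ + x₂ + x₃) + c * (x₁^2 + x₂^2 + x₃^2) + x₄ * x₅ = 0)
    (h4 : p * x₄^2 + q * x₅^2 = 0)
    (h5 : p * x₅^2 + q * x₄^2 = 0) :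
    x₁ = 0 ∧ x₂ = 0 ∧ x₃ = 0 ∧ x₄ = 0 ∧ x₅ = 0 :=
  stmt17_general a b c p q ha habc hE hpq x₁ x₂ x₃ x₄ x₅ h1 h2 h3 h4 h5
end
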